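/- Let ε > 0 and let k̄ = l̄ be a nonnegative integer with k̄ ≥ max{ m·⌈2W_m − 1⌉ − 1 , m·⌈W_m·e − ln ε − rτ + ln(4m(m+1)KG)⌉ − 1 }. Then the European put values on the full and on the truncated tree satisfy V − V^{TT} < ε. -/

import Mathlib

open Finset

open scoped Classical

noncomputable section

namespace HScut

/-- Level of a jump path `s : Fin n → ℤ` at time `t` (sum of the first `t` jumps). -/
def levelAt (n : ℕ) (s : Fin n → ℤ) (t : ℕ) : ℤ :=
  ∑ i ∈ Finset.univ.filter (fun i : Fin n => (i : ℕ) < t), s i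

/-- Jump paths of length `n` with jumps of amplitude at most `m`. -/
def paths (n m : ℕ) : Finset (Fin n → ℤ) :=
  Fintype.piFinset fun _ => Finset.Icc (-(m : ℤ)) (m : ℤ)

/-- Weight `π(s) = ∏ q (s i)` of a jump path. -/
def pathWeight (n : ℕ) (q : ℤ → ℝ) (s : Fin n → ℤ) : ℝ :=
  ∏ i, q (s i)

/-- Modified weight `π̃(s)`, where each `q (±i)` (`i ≠ 0`) is replaced by `max (q i) (q (-i))`
(which equals `w_i / n`). -/
def modWeight (n : ℕ) (q : ℤ → ℝ) (s : Fin n → ℤ) : ℝ :=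
  ∏ i, (if s i = 0 then q 0 else max (q (s i)) (q (-s i)))

/-- `q^{(n)}(k)`: probability of a net balance of `k` cumulative jumps at maturity. -/
def qfull (n m : ℕ) (q : ℤ → ℝ) (k : ℤ) : ℝ :=
  ∑ s ∈ (paths n m).filter (fun s => levelAt n s n = k), pathWeight n q s

/-- `q̃^{(n)}(k)`: enlarged probability of a net balance of `k` cumulative jumps at maturity. -/
def qtilde (n m : ℕ) (q : ℤ → ℝ) (k : ℤ) : ℝ :=
  ∑ s ∈ (paths n m).filter (fun s => levelAt n s n = k), modWeight n q s

/-- `q^{k̄,(n)}(k)`: probability of a net balance of `k` jumps at maturity while reaching at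
some time a net balance higher than `k̄`. -/
def qup (n m : ℕ) (q : ℤ → ℝ) (kbar : ℕ) (k : ℤ) : ℝ :=
  ∑ s ∈ (paths n m).filter
      (fun s => levelAt n s n = k ∧ ∃ t ≤ n, (kbar : ℤ) + 1 ≤ levelAt n s t),
    pathWeight n q s

/-- `q_{l̄}^{(n)}(k)`: probability of a net balance of `k` jumps at maturity while reaching at
some time a net balance lower than `-l̄`. -/
def qdown (n m : ℕ) (q : ℤ → ℝ) (lbar : ℕ) (k : ℤ) : ℝ :=
  ∑ s ∈ (paths n m).filter
      (fun s => levelAt n s n = k ∧ ∃ t ≤ n, levelAt n s t ≤ -(lbar : ℤ) - 1),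
    pathWeight n q s

/-- `q^{cut,(n)}(k)`: probability of reaching level `k` at maturity without ever leaving the
band `[-l̄, k̄]`. -/
def qcut (n m : ℕ) (q : ℤ → ℝ) (kbar lbar : ℕ) (k : ℤ) : ℝ :=
  ∑ s ∈ (paths n m).filter
      (fun s => levelAt n s n = k ∧
        ∀ t ≤ n, -(lbar : ℤ) ≤ levelAt n s t ∧ levelAt n s t ≤ (kbar : ℤ)),
    pathWeight n q s

/-- `P(j) = C(n,j) p^j (1-p)^(n-j)`. -/
def binomP (n : ℕ) (p : ℝ) (j : ℕ) : ℝ :=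
  (n.choose j : ℝ) * p ^ j * (1 - p) ^ (n - j)

/-- Put payoff at the terminal node `(n, j, k)`. -/
def putPayoff (n : ℕ) (S0 K σ dt h : ℝ) (j : ℕ) (k : ℤ) : ℝ :=
  max (K - S0 * Real.exp ((2 * (j : ℝ) - (n : ℝ)) * (σ * Real.sqrt dt) + h * (k : ℝ))) 0

/-- European put value `V` on the full tree. -/
def Vput (n m : ℕ) (q : ℤ → ℝ) (p S0 K σ τ h r : ℝ) : ℝ :=
  Real.exp (-(r * τ)) *
    ∑ k ∈ Finset.Icc (-((m : ℤ) * n)) ((m : ℤ) * n), ∑ j ∈ Finset.range (n + 1),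
      putPayoff n S0 K σ (τ / n) h j k * binomP n p j * qfull n m q k

/-- European put value `V^{TT}` on the truncated tree. -/
def VTT (n m : ℕ) (q : ℤ → ℝ) (p S0 K σ τ h r : ℝ) (kbar lbar : ℕ) : ℝ :=
  Real.exp (-(r * τ)) *
    ∑ k ∈ Finset.Icc (-(lbar : ℤ)) (kbar : ℤ), ∑ j ∈ Finset.range (n + 1),
      putPayoff n S0 K σ (τ / n) h j k * binomP n p j * qcut n m q kbar lbar k

/-- The sequence `W_i`: `W₁ = w₁`, `W_{i+1} = w_{i+1} + W_i^{(i+1)/i}` (real powers). -/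
def Wseq (w : ℕ → ℝ) : ℕ → ℝ
  | 0 => 0
  | 1 => w 1
  | (i + 2) => w (i + 2) + Wseq w (i + 1) ^ (((i : ℝ) + 2) / ((i : ℝ) + 1))

/-- `M_i = max { W_i, W_i^{(1-i)/i} }` (real powers). -/
def Mseq (w : ℕ → ℝ) (i : ℕ) : ℝ :=
  max (Wseq w i) (Wseq w i ^ ((1 - (i : ℝ)) / (i : ℝ)))

/-- `G = 2 m max{W_m, 1} e^{W_m} ∏_{i=1}^{m-1} M_i²`. -/
def Gconst (w : ℕ → ℝ) (m : ℕ) : ℝ :=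
  2 * m * max (Wseq w m) 1 * Real.exp (Wseq w m) * ∏ i ∈ Finset.Icc 1 (m - 1), (Mseq w i) ^ 2

/-- Value of the underlying at a node with (real) time index `i`, `j` up Brownian moves and
net jump level `l`. -/
def Sval (S0 σ dt h : ℝ) (i : ℝ) (j : ℕ) (l : ℤ) : ℝ :=
  S0 * Real.exp ((2 * (j : ℝ) - i) * (σ * Real.sqrt dt) + (l : ℝ) * h)

/-- Full backward European put price; `VEfull … d j l` is the value `V_E(n-d, j, l)`
(`d` = number of remaining steps). -/
def VEfull (n m : ℕ) (q : ℤ → ℝ) (p dt S0 K σ h r : ℝ) : ℕ → ℕ → ℤ → ℝ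
  | 0, j, l => max (K - Sval S0 σ dt h (n : ℝ) j l) 0
  | (d + 1), j, l =>
      Real.exp (-(r * dt)) *
        ∑ k ∈ Finset.Icc (-(m : ℤ)) (m : ℤ),
          (VEfull n m q p dt S0 K σ h r d (j + 1) (l + k) * p +
            VEfull n m q p dt S0 K σ h r d j (l + k) * (1 - p)) * q k

/-- Full backward American put price; `VAfull … d j l` is the value `V_A(n-d, j, l)`. -/
def VAfull (n m : ℕ) (q : ℤ → ℝ) (p dt S0 K σ h r : ℝ) : ℕ → ℕ → ℤ → ℝ
  | 0, j, l => max (K - Sval S0 σ dt h (n : ℝ) j l) 0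
  | (d + 1), j, l =>
      max
        (Real.exp (-(r * dt)) *
          ∑ k ∈ Finset.Icc (-(m : ℤ)) (m : ℤ),
            (VAfull n m q p dt S0 K σ h r d (j + 1) (l + k) * p +
              VAfull n m q p dt S0 K σ h r d j (l + k) * (1 - p)) * q k)
        (K - Sval S0 σ dt h ((n : ℝ) - (d + 1)) j l)

/-- Truncated backward European put price with boundary value `b`;
`VEtr … d j l` is the value `V_E^b(n-d, j, l)`. -/
def VEtr (n m : ℕ) (q : ℤ → ℝ) (p dt S0 K σ h r b : ℝ) (kbar lbar : ℕ) :
    ℕ → ℕ → ℤ → ℝ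
  | 0, j, l =>
      if -(lbar : ℤ) ≤ l ∧ l ≤ (kbar : ℤ) then max (K - Sval S0 σ dt h (n : ℝ) j l) 0 else b
  | (d + 1), j, l =>
      if -(lbar : ℤ) ≤ l ∧ l ≤ (kbar : ℤ) then
        Real.exp (-(r * dt)) *
          ∑ k ∈ Finset.Icc (-(m : ℤ)) (m : ℤ),
            (VEtr n m q p dt S0 K σ h r b kbar lbar d (j + 1) (l + k) * p +
              VEtr n m q p dt S0 K σ h r b kbar lbar d j (l + k) * (1 - p)) * q k
      else b

/-- Truncated backward American put price with boundary value `b`;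
`VAtr … d j l` is the value `V_A^b(n-d, j, l)`. -/
def VAtr (n m : ℕ) (q : ℤ → ℝ) (p dt S0 K σ h r b : ℝ) (kbar lbar : ℕ) :
    ℕ → ℕ → ℤ → ℝ
  | 0, j, l =>
      if -(lbar : ℤ) ≤ l ∧ l ≤ (kbar : ℤ) then max (K - Sval S0 σ dt h (n : ℝ) j l) 0 else b
  | (d + 1), j, l =>
      if -(lbar : ℤ) ≤ l ∧ l ≤ (kbar : ℤ) then
        max
          (Real.exp (-(r * dt)) *
            ∑ k ∈ Finset.Icc (-(m : ℤ)) (m : ℤ),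
              (VAtr n m q p dt S0 K σ h r b kbar lbar d (j + 1) (l + k) * p +
                VAtr n m q p dt S0 K σ h r b kbar lbar d j (l + k) * (1 - p)) * q k)
          (K - Sval S0 σ dt h ((n : ℝ) - (d + 1)) j l)
      else b

/-- The sum, over all jump-path prefixes that first exit the band `[-l̄, k̄]` at some time
`1 ≤ i ≤ n`, of the prefix probability times `b e^{-r i Δt}`. -/
def exitSum (n m : ℕ) (q : ℤ → ℝ) (r dt : ℝ) (kbar lbar : ℕ) (b : ℝ) : ℝ :=
  ∑ i ∈ Finset.Icc 1 n,
    ∑ y ∈ (paths i m).filter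
        (fun y =>
          (∀ t < i, -(lbar : ℤ) ≤ levelAt i y t ∧ levelAt i y t ≤ (kbar : ℤ)) ∧
          ¬(-(lbar : ℤ) ≤ levelAt i y i ∧ levelAt i y i ≤ (kbar : ℤ))),
      pathWeight i q y * (b * Real.exp (-(r * (i : ℝ) * dt)))

end HScut

open HScut

/-! Every path that leaves the band `[-k̄, k̄]` is missing from the truncated tree and contributes
at most `K e^{-rτ}` to the put price, so `V - V^{TT}` is at most `K e^{-rτ}` times the probability
of leaving the band. By the maximal Chernoff inequality with tilt `1/m`, the running maximum
reaches `k̄ + 1` with probability at most `e^{-(k̄+1)/m} (1 + (e - 1) Σ_i w_i / n)^n ≤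
e^{-(k̄+1)/m} e^{(e-1) Σ_i w_i}`, and the running minimum is handled by reflection. Finally, the
recursion for `W_i` telescopes `Σ_i w_i` into `W_m` plus the defects `W_i - W_i^{(i+1)/i}`, and
`(e - 1)` times such a defect is at most `2 log M_i` (plus `1/2` when `i = 1`); this is how `G`
enters the threshold. -/

open Finset Real

namespace HScut

lemma sum_mul_sum_fiberwise {ι κ R : Type*} [DecidableEq κ] [CommSemiring R] {s : Finset ι}
    {t : Finset κ} {g : ι → κ} (hg : ∀ i ∈ s, g i ∈ t) (f : κ → R) (w : ι → R) :
    ∑ j ∈ t, f j * ∑ i ∈ s with g i = j, w i = ∑ i ∈ s, f (g i) * w i := by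
  rw [← sum_fiberwise_of_maps_to hg]
  refine sum_congr rfl fun j _ => ?_
  rw [mul_sum]
  exact sum_congr rfl fun i hi => by rw [(mem_filter.1 hi).2]

lemma sum_Icc_natCast {M : Type*} [AddCommMonoid M] (f : ℤ → M) (a b : ℕ) :
    ∑ l ∈ Icc (a : ℤ) b, f l = ∑ i ∈ Icc a b, f i := by
  have himage : (Icc a b).image (Nat.cast : ℕ → ℤ) = Icc (a : ℤ) b := by
    rw [← coe_inj, coe_image, coe_Icc, coe_Icc]
    exact Nat.image_cast_int_Icc a b
  rw [← himage, sum_image Nat.cast_injective.injOn]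

lemma sum_Icc_neg_self_comp_neg {M : Type*} [AddCommMonoid M] (f : ℤ → M) (a : ℤ) :
    ∑ l ∈ Icc (-a) a, f (-l) = ∑ l ∈ Icc (-a) a, f l :=
  sum_nbij' Neg.neg Neg.neg (fun l hl => by simp only [mem_Icc] at hl ⊢; omega)
    (fun l hl => by simp only [mem_Icc] at hl ⊢; omega) (fun l _ => neg_neg l)
    (fun l _ => neg_neg l) fun _ _ => rfl

section Paths

variable {N m : ℕ}

lemma mem_paths {s : Fin N → ℤ} : s ∈ paths N m ↔ ∀ i, s i ∈ Icc (-(m : ℤ)) m :=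
  Fintype.mem_piFinset

lemma neg_mem_paths {s : Fin N → ℤ} (hs : s ∈ paths N m) : -s ∈ paths N m := by
  simp only [mem_paths, mem_Icc] at hs ⊢
  intro i
  have := hs i
  simp only [Pi.neg_apply]
  omega

lemma levelAt_zero (s : Fin N → ℤ) : levelAt N s 0 = 0 := by
  simp [levelAt]

lemma levelAt_cons (l : ℤ) (s : Fin N → ℤ) (t : ℕ) :
    levelAt (N + 1) (Fin.cons l s) (t + 1) = l + levelAt N s t := by
  simp [levelAt, sum_filter, Fin.sum_univ_succ]

lemma levelAt_neg (s : Fin N → ℤ) (t : ℕ) : levelAt N (-s) t = -levelAt N s t := by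
  simp [levelAt]

lemma levelAt_self_mem_Icc {s : Fin N → ℤ} (hs : s ∈ paths N m) :
    levelAt N s N ∈ Icc (-((m : ℤ) * N)) ((m : ℤ) * N) := by
  have hsum : levelAt N s N = ∑ i, s i := by simp [levelAt]
  simp only [mem_paths, mem_Icc] at hs
  rw [hsum, mem_Icc]
  constructor
  · simpa [mul_comm] using sum_le_sum fun i (_ : i ∈ univ) => (hs i).1
  · simpa [mul_comm] using sum_le_sum fun i (_ : i ∈ univ) => (hs i).2

lemma sum_paths_succ {M : Type*} [AddCommMonoid M] (f : (Fin (N + 1) → ℤ) → M) :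
    ∑ s ∈ paths (N + 1) m, f s =
      ∑ l ∈ Icc (-(m : ℤ)) m, ∑ s ∈ paths N m, f (Fin.cons l s) := by
  have h := filter_piFinset_eq_map_consEquiv (fun _ : Fin (N + 1) => Icc (-(m : ℤ)) m)
    (fun _ => True)
  simp only [filter_true] at h
  rw [paths, h, sum_map, sum_product]
  rfl

lemma pathWeight_cons (q : ℤ → ℝ) (l : ℤ) (s : Fin N → ℤ) :
    pathWeight (N + 1) q (Fin.cons l s) = q l * pathWeight N q s := by
  simp [pathWeight, Fin.prod_univ_succ]

variable {q : ℤ → ℝ}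

lemma pathWeight_nonneg (hq : ∀ l ∈ Icc (-(m : ℤ)) m, 0 ≤ q l) {s : Fin N → ℤ}
    (hs : s ∈ paths N m) : 0 ≤ pathWeight N q s :=
  prod_nonneg fun i _ => hq _ (mem_paths.1 hs i)

lemma sum_pathWeight (hsum : ∑ l ∈ Icc (-(m : ℤ)) m, q l = 1) :
    ∑ s ∈ paths N m, pathWeight N q s = 1 := by
  simp only [paths, pathWeight]
  rw [← prod_univ_sum]
  simp [hsum]

end Paths

def reachWeight (N m : ℕ) (q : ℤ → ℝ) (B : ℤ) : ℝ :=
  ∑ s ∈ (paths N m).filter (fun s => ∃ t ≤ N, B ≤ levelAt N s t), pathWeight N q s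

section Reach

variable {N m : ℕ} {q : ℤ → ℝ} {B : ℤ}

lemma reachWeight_le_one (hq : ∀ l ∈ Icc (-(m : ℤ)) m, 0 ≤ q l)
    (hsum : ∑ l ∈ Icc (-(m : ℤ)) m, q l = 1) : reachWeight N m q B ≤ 1 :=
  (sum_pathWeight hsum).le.trans' <| sum_le_sum_of_subset_of_nonneg (filter_subset _ _)
    fun _ hs _ => pathWeight_nonneg hq hs

lemma reachWeight_zero (hB : 0 < B) : reachWeight 0 m q B = 0 := by
  refine sum_eq_zero fun s hs => absurd (mem_filter.1 hs).2 ?_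
  rintro ⟨t, ht, hBt⟩
  rw [Nat.le_zero.1 ht, levelAt_zero] at hBt
  omega

lemma exists_le_levelAt_cons_iff (hB : 0 < B) (l : ℤ) (s : Fin N → ℤ) :
    (∃ t ≤ N + 1, B ≤ levelAt (N + 1) (Fin.cons l s) t) ↔
      ∃ t ≤ N, B - l ≤ levelAt N s t := by
  constructor
  · rintro ⟨_ | t, ht, hBt⟩
    · rw [levelAt_zero] at hBt
      omega
    · rw [levelAt_cons] at hBt
      exact ⟨t, by omega, by omega⟩
  · rintro ⟨t, ht, hBt⟩
    exact ⟨t + 1, by omega, by rw [levelAt_cons]; omega⟩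

lemma reachWeight_succ (hB : 0 < B) :
    reachWeight (N + 1) m q B = ∑ l ∈ Icc (-(m : ℤ)) m, q l * reachWeight N m q (B - l) := by
  simp only [reachWeight, sum_filter, sum_paths_succ, exists_le_levelAt_cons_iff hB,
    pathWeight_cons, mul_sum, mul_ite, mul_zero]

/-- Maximal Chernoff inequality, proved by conditioning on the first jump; for `B ≤ 0` the
right-hand side is at least `1`. -/
lemma reachWeight_le_exp_mul_pow (hq : ∀ l ∈ Icc (-(m : ℤ)) m, 0 ≤ q l)
    (hsum : ∑ l ∈ Icc (-(m : ℤ)) m, q l = 1) {θ C : ℝ} (hθ : 0 ≤ θ) (hC : 1 ≤ C)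
    (hmgf : ∑ l ∈ Icc (-(m : ℤ)) m, q l * exp (θ * l) ≤ C) (N : ℕ) (B : ℤ) :
    reachWeight N m q B ≤ exp (-(θ * B)) * C ^ N := by
  have h_nonpos : ∀ N B, B ≤ 0 → reachWeight N m q B ≤ exp (-(θ * B)) * C ^ N := by
    intro N B hB
    have hB' : (B : ℝ) ≤ 0 := by exact_mod_cast hB
    have hexp : 1 ≤ exp (-(θ * B)) := one_le_exp (by nlinarith)
    exact (reachWeight_le_one hq hsum).trans
      (one_le_mul_of_one_le_of_one_le hexp (one_le_pow₀ hC))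
  induction N generalizing B with
  | zero =>
    rcases le_or_gt B 0 with hB | hB
    · exact h_nonpos 0 B hB
    rw [reachWeight_zero hB]
    positivity
  | succ N ih =>
    rcases le_or_gt B 0 with hB | hB
    · exact h_nonpos (N + 1) B hB
    rw [reachWeight_succ hB]
    calc ∑ l ∈ Icc (-(m : ℤ)) m, q l * reachWeight N m q (B - l)
        ≤ ∑ l ∈ Icc (-(m : ℤ)) m, q l * (exp (θ * l) * (exp (-(θ * B)) * C ^ N)) := by
          refine sum_le_sum fun l hl => mul_le_mul_of_nonneg_left ?_ (hq l hl)
          have hexp : exp (-(θ * ↑(B - l))) = exp (θ * l) * exp (-(θ * B)) := by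
            rw [← exp_add]; push_cast; ring_nf
          rw [← mul_assoc, ← hexp]
          exact ih (B - l)
      _ = (∑ l ∈ Icc (-(m : ℤ)) m, q l * exp (θ * l)) * (exp (-(θ * B)) * C ^ N) := by
          rw [sum_mul]; simp only [mul_assoc]
      _ ≤ C * (exp (-(θ * B)) * C ^ N) := by gcongr
      _ = exp (-(θ * B)) * C ^ (N + 1) := by ring

lemma sum_mul_exp_le (hq : ∀ l ∈ Icc (-(m : ℤ)) m, 0 ≤ q l)
    (hsum : ∑ l ∈ Icc (-(m : ℤ)) m, q l = 1) {a : ℕ → ℝ}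
    (ha : ∀ i ∈ Icc 1 m, q i ≤ a i) :
    ∑ l ∈ Icc (-(m : ℤ)) m, q l * exp ((m : ℝ)⁻¹ * l) ≤
      1 + (exp 1 - 1) * ∑ i ∈ Icc 1 m, a i := by
  have he : 0 ≤ exp 1 - 1 := by linarith [add_one_le_exp 1]
  have hpoint : ∀ l ∈ Icc (-(m : ℤ)) m,
      q l * exp ((m : ℝ)⁻¹ * l) ≤ q l + if 1 ≤ l then (exp 1 - 1) * q l else 0 := by
    intro l hl
    have hql := hq l hl
    obtain ⟨-, hlm⟩ := mem_Icc.1 hl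
    split_ifs with hl1
    · have hm : (0 : ℝ) < m := by exact_mod_cast (by omega : (0 : ℤ) < m)
      have : (m : ℝ)⁻¹ * l ≤ 1 := by
        rw [inv_mul_le_iff₀ hm, mul_one]
        exact_mod_cast hlm
      nlinarith [exp_le_exp.2 this]
    · have : (m : ℝ)⁻¹ * l ≤ 0 :=
        mul_nonpos_of_nonneg_of_nonpos (by positivity) (by exact_mod_cast (by omega : l ≤ 0))
      nlinarith [exp_le_one_iff.2 this]
  calc _ ≤ ∑ l ∈ Icc (-(m : ℤ)) m, (q l + if 1 ≤ l then (exp 1 - 1) * q l else 0) :=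
        sum_le_sum hpoint
    _ = 1 + (exp 1 - 1) * ∑ l ∈ Icc ((1 : ℕ) : ℤ) m, q l := by
        rw [sum_add_distrib, hsum, ← sum_filter, ← mul_sum]
        congr 3
        ext l
        simp only [mem_filter, mem_Icc, Nat.cast_one]
        omega
    _ ≤ 1 + (exp 1 - 1) * ∑ i ∈ Icc 1 m, a i := by
        rw [sum_Icc_natCast]
        gcongr with i hi
        exact ha i hi

end Reach

def staysInBand (n kbar lbar : ℕ) (s : Fin n → ℤ) : Prop :=
  ∀ t ≤ n, -(lbar : ℤ) ≤ levelAt n s t ∧ levelAt n s t ≤ kbar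

section Band

variable {n m : ℕ} {q : ℤ → ℝ}

lemma sum_filter_exists_levelAt_le_neg (B : ℤ) :
    ∑ s ∈ (paths n m).filter (fun s => ∃ t ≤ n, levelAt n s t ≤ -B), pathWeight n q s =
      reachWeight n m (fun l => q (-l)) B := by
  refine sum_nbij' (fun s => -s) (fun s => -s) ?_ ?_ (fun _ _ => neg_neg _)
    (fun _ _ => neg_neg _) fun s _ => by simp [pathWeight]
  all_goals
    intro s hs
    simp only [mem_filter, levelAt_neg] at hs ⊢
    obtain ⟨hs, t, ht, hB⟩ := hs
    exact ⟨neg_mem_paths hs, t, ht, by omega⟩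

lemma sum_filter_not_staysInBand_le (hq : ∀ l ∈ Icc (-(m : ℤ)) m, 0 ≤ q l)
    (kbar lbar : ℕ) :
    ∑ s ∈ (paths n m).filter (fun s => ¬staysInBand n kbar lbar s), pathWeight n q s ≤
      reachWeight n m q (kbar + 1) + reachWeight n m (fun l => q (-l)) (lbar + 1) := by
  rw [← sum_filter_exists_levelAt_le_neg, reachWeight, sum_filter, sum_filter, sum_filter,
    ← sum_add_distrib]
  refine sum_le_sum fun s hs => ?_
  have hπ := pathWeight_nonneg hq hs
  have hexit : ¬staysInBand n kbar lbar s →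
      (∃ t ≤ n, (kbar : ℤ) + 1 ≤ levelAt n s t) ∨
        ∃ t ≤ n, levelAt n s t ≤ -((lbar : ℤ) + 1) := by
    simp only [staysInBand, not_forall]
    rintro ⟨t, ht, hband⟩
    by_cases hup : (kbar : ℤ) + 1 ≤ levelAt n s t
    · exact .inl ⟨t, ht, hup⟩
    · exact .inr ⟨t, ht, by omega⟩
  by_cases hstay : staysInBand n kbar lbar s
  · rw [if_neg (not_not.2 hstay)]
    exact add_nonneg (ite_nonneg hπ le_rfl) (ite_nonneg hπ le_rfl)
  rw [if_pos hstay]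
  rcases hexit hstay with hup | hdown
  · rw [if_pos hup]
    exact le_add_of_nonneg_right (ite_nonneg hπ le_rfl)
  · rw [if_pos hdown]
    exact le_add_of_nonneg_left (ite_nonneg hπ le_rfl)

lemma sum_filter_not_staysInBand_le_exp (hq : ∀ l ∈ Icc (-(m : ℤ)) m, 0 ≤ q l)
    (hsum : ∑ l ∈ Icc (-(m : ℤ)) m, q l = 1) (kbar lbar : ℕ) :
    ∑ s ∈ (paths n m).filter (fun s => ¬staysInBand n kbar lbar s), pathWeight n q s ≤
      (exp (-(((kbar : ℝ) + 1) / m)) + exp (-(((lbar : ℝ) + 1) / m))) *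
        exp ((exp 1 - 1) * (n * ∑ i ∈ Icc 1 m, max (q i) (q (-i)))) := by
  set A := ∑ i ∈ Icc 1 m, max (q i) (q (-i))
  set C := 1 + (exp 1 - 1) * A
  have he : 0 ≤ exp 1 - 1 := by linarith [add_one_le_exp 1]
  have hA : 0 ≤ A := sum_nonneg fun i hi =>
    (hq i (by simp only [mem_Icc] at hi ⊢; omega)).trans (le_max_left _ _)
  have hC : 1 ≤ C := le_add_of_nonneg_right (mul_nonneg he hA)
  have hCpow : C ^ n ≤ exp ((exp 1 - 1) * (n * A)) :=
    calc C ^ n ≤ exp ((exp 1 - 1) * A) ^ n :=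
          pow_le_pow_left₀ (by linarith) (by linarith [add_one_le_exp ((exp 1 - 1) * A)]) n
      _ = exp ((exp 1 - 1) * (n * A)) := by rw [← exp_nat_mul]; ring_nf
  have hq' : ∀ l ∈ Icc (-(m : ℤ)) m, 0 ≤ q (-l) := fun l hl =>
    hq (-l) (by simp only [mem_Icc] at hl ⊢; omega)
  have hsum' : ∑ l ∈ Icc (-(m : ℤ)) m, q (-l) = 1 := by rw [sum_Icc_neg_self_comp_neg, hsum]
  have hθ : (0 : ℝ) ≤ (m : ℝ)⁻¹ := by positivity
  have hup := reachWeight_le_exp_mul_pow hq hsum hθ hC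
    (sum_mul_exp_le hq hsum fun i _ => le_max_left _ _) n (kbar + 1)
  have hdown := reachWeight_le_exp_mul_pow hq' hsum' hθ hC
    (sum_mul_exp_le hq' hsum' fun i _ => le_max_right _ _) n (lbar + 1)
  push_cast [inv_mul_eq_div] at hup hdown
  refine (sum_filter_not_staysInBand_le hq kbar lbar).trans ?_
  rw [add_mul]
  gcongr
  · exact hup.trans (by gcongr)
  · exact hdown.trans (by gcongr)

end Band

section Pricing

variable {n : ℕ} {p S0 K : ℝ}

lemma binomP_nonneg (hp0 : 0 ≤ p) (hp1 : p ≤ 1) (j : ℕ) : 0 ≤ binomP n p j := by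
  unfold binomP
  have : 0 ≤ 1 - p := by linarith
  positivity

lemma sum_binomP : ∑ j ∈ range (n + 1), binomP n p j = 1 :=
  calc ∑ j ∈ range (n + 1), binomP n p j = (p + (1 - p)) ^ n := by
        rw [add_pow]
        exact sum_congr rfl fun j _ => by rw [binomP]; ring
    _ = 1 := by rw [add_sub_cancel, one_pow]

lemma putPayoff_le (hS0 : 0 ≤ S0) (hK : 0 ≤ K) (σ dt h : ℝ) (j : ℕ) (k : ℤ) :
    putPayoff n S0 K σ dt h j k ≤ K :=
  max_le (sub_le_self _ (by positivity)) hK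

def expectedPayoff (n : ℕ) (p S0 K σ τ h : ℝ) (k : ℤ) : ℝ :=
  ∑ j ∈ range (n + 1), putPayoff n S0 K σ (τ / n) h j k * binomP n p j

variable {σ τ h : ℝ}

lemma expectedPayoff_le (hp0 : 0 ≤ p) (hp1 : p ≤ 1) (hS0 : 0 ≤ S0) (hK : 0 ≤ K) (k : ℤ) :
    expectedPayoff n p S0 K σ τ h k ≤ K :=
  calc expectedPayoff n p S0 K σ τ h k ≤ ∑ j ∈ range (n + 1), K * binomP n p j :=
        sum_le_sum fun j _ => mul_le_mul_of_nonneg_right (putPayoff_le hS0 hK _ _ _ j k)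
          (binomP_nonneg hp0 hp1 j)
    _ = K := by rw [← mul_sum, sum_binomP, mul_one]

variable {m : ℕ} {q : ℤ → ℝ} {r : ℝ}

lemma Vput_eq_sum_paths : Vput n m q p S0 K σ τ h r =
    exp (-(r * τ)) * ∑ s ∈ paths n m, expectedPayoff n p S0 K σ τ h (levelAt n s n) *
      pathWeight n q s := by
  rw [Vput, ← sum_mul_sum_fiberwise fun s hs => levelAt_self_mem_Icc hs]
  simp only [expectedPayoff, sum_mul]
  rfl

lemma VTT_eq_sum_paths (kbar lbar : ℕ) : VTT n m q p S0 K σ τ h r kbar lbar =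
    exp (-(r * τ)) * ∑ s ∈ (paths n m).filter (staysInBand n kbar lbar),
      expectedPayoff n p S0 K σ τ h (levelAt n s n) * pathWeight n q s := by
  rw [VTT, ← sum_mul_sum_fiberwise (s := (paths n m).filter (staysInBand n kbar lbar))
    fun s hs => mem_Icc.2 ((mem_filter.1 hs).2 n le_rfl)]
  simp only [expectedPayoff, sum_mul, qcut, filter_filter, and_comm (b := levelAt n _ n = _)]
  congr!

lemma Vput_sub_VTT_le (hq : ∀ l ∈ Icc (-(m : ℤ)) m, 0 ≤ q l) (hp0 : 0 ≤ p) (hp1 : p ≤ 1)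
    (hS0 : 0 ≤ S0) (hK : 0 ≤ K) (kbar lbar : ℕ) :
    Vput n m q p S0 K σ τ h r - VTT n m q p S0 K σ τ h r kbar lbar ≤
      exp (-(r * τ)) * K *
        ∑ s ∈ (paths n m).filter (fun s => ¬staysInBand n kbar lbar s), pathWeight n q s := by
  rw [Vput_eq_sum_paths, VTT_eq_sum_paths, ← mul_sub,
    ← sum_filter_add_sum_filter_not (paths n m) (staysInBand n kbar lbar), add_sub_cancel_left,
    mul_assoc, mul_sum _ _ K]
  gcongr with s hs
  · exact pathWeight_nonneg hq (mem_filter.1 hs).1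
  · exact expectedPayoff_le hp0 hp1 hS0 hK _

end Pricing

lemma mul_sub_sq_le_half (x : ℝ) : (exp 1 - 1) * (x - x ^ 2) ≤ 1 / 2 := by
  have he : exp 1 < 2.7182818286 := exp_one_lt_d9
  have he' : 0 ≤ exp 1 - 1 := by linarith [add_one_le_exp 1]
  nlinarith [sq_nonneg (x - 1 / 2), mul_nonneg he' (sq_nonneg (x - 1 / 2))]

lemma one_le_max_rpow {x e : ℝ} (hx : 0 < x) (he : e ≤ 0) : 1 ≤ max x (x ^ e) := by
  rcases le_or_gt 1 x with h | h
  · exact h.trans (le_max_left _ _)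
  · exact (one_le_rpow_of_pos_of_le_one_of_nonpos hx h.le he).trans (le_max_right _ _)

/-- For `x ≥ 1` the left side is nonpositive. For `x < 1`, with `u = x^{1/a} < 1`, it equals
`(e - 1) x (1 - u) ≤ 2 (a - 1)(1 - u)`, and `1 - u ≤ -log u = -log x / a`. -/
lemma mul_sub_rpow_le_two_mul_log {x a : ℝ} (hx : 0 < x) (ha : 2 ≤ a) :
    (exp 1 - 1) * (x - x ^ ((a + 1) / a)) ≤ 2 * log (max x (x ^ ((1 - a) / a))) := by
  have hlog : 0 ≤ log (max x (x ^ ((1 - a) / a))) :=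
    log_nonneg (one_le_max_rpow hx (div_nonpos_of_nonpos_of_nonneg (by linarith) (by linarith)))
  rcases le_or_gt 1 x with h1 | h1
  · have : x ≤ x ^ ((a + 1) / a) := by
      conv_lhs => rw [← rpow_one x]
      exact rpow_le_rpow_of_exponent_le h1 ((one_le_div (by linarith)).2 (by linarith))
    nlinarith [add_one_le_exp 1]
  set u := x ^ a⁻¹ with hu
  have hu0 : 0 < u := rpow_pos_of_pos hx _
  have hu1 : u ≤ 1 := rpow_le_one hx.le h1.le (by positivity)
  have hxu : x ^ ((a + 1) / a) = x * u := by
    rw [show (a + 1) / a = 1 + a⁻¹ by field_simp, rpow_add hx, rpow_one]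
  have hlogx : log (x ^ ((1 - a) / a)) = (1 - a) * log u := by
    rw [log_rpow hx, hu, log_rpow hx]
    ring
  have hmax : (1 - a) * log u ≤ log (max x (x ^ ((1 - a) / a))) :=
    hlogx ▸ log_le_log (rpow_pos_of_pos hx _) (le_max_right _ _)
  have he : exp 1 < 2.7182818286 := exp_one_lt_d9
  have hlogu : log u ≤ u - 1 := log_le_sub_one_of_pos hu0
  rw [hxu]
  nlinarith [mul_nonneg (sub_nonneg.2 hu1) (by linarith : 0 ≤ a - 2),
    mul_nonneg (sub_nonneg.2 hu1) hx.le,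
    mul_nonneg (by linarith : 0 ≤ a - 1) (by linarith : 0 ≤ u - 1 - log u)]

section Weights

variable {w : ℕ → ℝ} {m : ℕ}

lemma Wseq_succ {i : ℕ} (hi : 1 ≤ i) :
    Wseq w (i + 1) = w (i + 1) + Wseq w i ^ (((i : ℝ) + 1) / i) := by
  obtain ⟨k, rfl⟩ := Nat.exists_eq_add_of_le' hi
  rw [Wseq]
  push_cast
  ring_nf

lemma Wseq_pos (hw1 : 0 < w 1) (hw : ∀ i ∈ Icc 1 m, 0 ≤ w i) {i : ℕ}
    (hi : i ∈ Icc 1 m) : 0 < Wseq w i := by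
  obtain ⟨hi1, him⟩ := mem_Icc.1 hi
  induction i, hi1 using Nat.le_induction with
  | base => exact hw1
  | succ i hi1 ih =>
    rw [Wseq_succ hi1]
    have := hw (i + 1) (mem_Icc.2 ⟨by omega, him⟩)
    have := rpow_pos_of_pos (ih (mem_Icc.2 ⟨hi1, by omega⟩) (by omega)) (((i : ℝ) + 1) / i)
    linarith

lemma sum_Icc_eq_Wseq_add (hm : 1 ≤ m) :
    ∑ i ∈ Icc 1 m, w i =
      Wseq w m + ∑ i ∈ Icc 1 (m - 1), (Wseq w i - Wseq w i ^ (((i : ℝ) + 1) / i)) := by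
  induction m, hm using Nat.le_induction with
  | base => simp [Wseq]
  | succ m hm ih =>
    rw [sum_Icc_succ_top (by omega), ih, Wseq_succ hm, Nat.add_sub_cancel,
      ← Nat.sub_add_cancel hm, sum_Icc_succ_top (by omega), Nat.sub_add_cancel hm]
    ring

lemma one_le_Mseq (hw1 : 0 < w 1) (hw : ∀ i ∈ Icc 1 m, 0 ≤ w i) {i : ℕ}
    (hi : i ∈ Icc 1 m) : 1 ≤ Mseq w i :=
  one_le_max_rpow (Wseq_pos hw1 hw hi) <| div_nonpos_of_nonpos_of_nonneg
    (by linarith [(Nat.one_le_cast (α := ℝ)).2 (mem_Icc.1 hi).1]) (Nat.cast_nonneg i)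

lemma mul_sum_le_Wseq_add (hm : 1 ≤ m) (hw1 : 0 < w 1)
    (hw : ∀ i ∈ Icc 1 m, 0 ≤ w i) :
    (exp 1 - 1) * ∑ i ∈ Icc 1 m, w i ≤
      (exp 1 - 1) * Wseq w m + 2 * ∑ i ∈ Icc 1 (m - 1), log (Mseq w i) + 1 / 2 := by
  have hterm : ∀ i ∈ Icc 1 (m - 1),
      (exp 1 - 1) * (Wseq w i - Wseq w i ^ (((i : ℝ) + 1) / i)) ≤
        2 * log (Mseq w i) + if i = 1 then 1 / 2 else 0 := by
    intro i hi
    have hi' : i ∈ Icc 1 m := Icc_subset_Icc_right (Nat.sub_le m 1) hi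
    rcases (mem_Icc.1 hi).1.eq_or_lt with rfl | hi2
    · rw [if_pos rfl, show (((1 : ℕ) : ℝ) + 1) / (1 : ℕ) = 2 by norm_num, rpow_two]
      linarith [mul_sub_sq_le_half (Wseq w 1), log_nonneg (one_le_Mseq hw1 hw hi')]
    · rw [if_neg hi2.ne', add_zero]
      exact mul_sub_rpow_le_two_mul_log (Wseq_pos hw1 hw hi') (by exact_mod_cast hi2)
  have hhalf : ∑ i ∈ Icc 1 (m - 1), (if i = 1 then (1 : ℝ) / 2 else 0) ≤ 1 / 2 := by
    rw [sum_ite_eq']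
    split_ifs <;> norm_num
  rw [sum_Icc_eq_Wseq_add hm, mul_add, mul_sum, mul_sum]
  linarith [sum_le_sum hterm, sum_add_distrib (s := Icc 1 (m - 1))
    (f := fun i => 2 * log (Mseq w i)) (g := fun i => if i = 1 then (1 : ℝ) / 2 else 0)]

lemma exp_mul_sum_le_mul_prod (hm : 1 ≤ m) (hw1 : 0 < w 1)
    (hw : ∀ i ∈ Icc 1 m, 0 ≤ w i) :
    exp ((exp 1 - 1) * ∑ i ∈ Icc 1 m, w i) ≤
      exp ((exp 1 - 1) * Wseq w m + 1 / 2) * ∏ i ∈ Icc 1 (m - 1), Mseq w i ^ 2 := by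
  have hM : ∀ i ∈ Icc 1 (m - 1), 0 < Mseq w i := fun i hi =>
    zero_lt_one.trans_le (one_le_Mseq hw1 hw (Icc_subset_Icc_right (Nat.sub_le m 1) hi))
  calc exp ((exp 1 - 1) * ∑ i ∈ Icc 1 m, w i)
      ≤ exp ((exp 1 - 1) * Wseq w m + 1 / 2 + ∑ i ∈ Icc 1 (m - 1), 2 * log (Mseq w i)) := by
        rw [← mul_sum]
        exact exp_le_exp.2 (by linarith [mul_sum_le_Wseq_add hm hw1 hw])
    _ = exp ((exp 1 - 1) * Wseq w m + 1 / 2) * ∏ i ∈ Icc 1 (m - 1), Mseq w i ^ 2 := by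
        rw [exp_add, exp_sum]
        congr 1
        refine prod_congr rfl fun i hi => ?_
        rw [mul_comm, exp_mul, exp_log (hM i hi), rpow_two]

end Weights

lemma le_add_one_div_of_mul_ceil_sub_one_le {m : ℕ} (hm : 1 ≤ m) {X k : ℝ}
    (h : (m : ℝ) * ⌈X⌉ - 1 ≤ k) : X ≤ (k + 1) / m := by
  rw [le_div_iff₀ (by exact_mod_cast hm)]
  linarith [mul_le_mul_of_nonneg_left (Int.le_ceil X) (Nat.cast_nonneg (α := ℝ) m)]

lemma error_bound_lt_of_threshold_le {m : ℕ} (hm : 1 ≤ m) {K ε W P r τ x : ℝ} (hK : 0 < K)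
    (hε : 0 < ε) (hW : 0 ≤ W) (hP : 0 < P)
    (hx : W * exp 1 - log ε - r * τ +
      log (4 * m * ((m : ℝ) + 1) * K * (2 * m * max W 1 * exp W * P)) ≤ x) :
    exp (-(r * τ)) * K * (2 * exp (-x) * (exp ((exp 1 - 1) * W + 1 / 2) * P)) < ε := by
  set D := 4 * m * ((m : ℝ) + 1) * K * (2 * m * max W 1 * exp W * P)
  have hm' : (1 : ℝ) ≤ m := by exact_mod_cast hm
  have hD : 0 < D := by positivity
  have hexp : exp (-x) ≤ ε * exp (r * τ) * exp (-(W * exp 1)) / D :=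
    calc exp (-x) ≤ exp (log ε + r * τ - W * exp 1 - log D) := exp_le_exp.2 (by linarith)
      _ = ε * exp (r * τ) * exp (-(W * exp 1)) / D := by
        rw [exp_sub, exp_sub, exp_add, exp_log hε, exp_log hD, exp_neg]
        field_simp
  have hkey : 2 * K * P * exp (1 / 2 - W) < D := by
    have h8 : exp (1 / 2 - W) < 8 := by
      linarith [exp_le_exp.2 (by linarith : 1 / 2 - W ≤ 1), exp_one_lt_d9]
    have h16 : 16 ≤ 4 * m * ((m : ℝ) + 1) * (2 * m * max W 1 * exp W) := by
      have hmax : 1 ≤ max W 1 * exp W :=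
        one_le_mul_of_one_le_of_one_le (le_max_right W 1) (one_le_exp hW)
      have hm3 : 1 * 2 * 1 ≤ (m : ℝ) * ((m : ℝ) + 1) * m := by gcongr; linarith
      calc (16 : ℝ) = 8 * 2 * 1 := by norm_num
        _ ≤ 8 * ((m : ℝ) * ((m : ℝ) + 1) * m) * (max W 1 * exp W) := by gcongr; linarith
        _ = 4 * m * ((m : ℝ) + 1) * (2 * m * max W 1 * exp W) := by ring
    calc 2 * K * P * exp (1 / 2 - W) < 2 * K * P * 8 := by gcongr
      _ ≤ K * P * (4 * m * ((m : ℝ) + 1) * (2 * m * max W 1 * exp W)) := by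
        nlinarith [mul_pos hK hP]
      _ = D := by ring
  calc exp (-(r * τ)) * K * (2 * exp (-x) * (exp ((exp 1 - 1) * W + 1 / 2) * P))
      ≤ exp (-(r * τ)) * K * (2 * (ε * exp (r * τ) * exp (-(W * exp 1)) / D) *
          (exp ((exp 1 - 1) * W + 1 / 2) * P)) := by gcongr
    _ = ε * (2 * K * P * exp (1 / 2 - W)) / D := by
      have hcomb : exp (1 / 2 - W) = exp (-(r * τ)) * exp (r * τ) *
          (exp (-(W * exp 1)) * exp ((exp 1 - 1) * W + 1 / 2)) := by
        simp only [← exp_add]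
        ring_nf
      rw [hcomb]
      ring
    _ < ε := by rw [div_lt_iff₀ hD]; exact mul_lt_mul_of_pos_left hkey hε

end HScut

theorem put_truncation_error_general_general (n m : ℕ) (hn : 1 ≤ n) (hm : 1 ≤ m) (q : ℤ → ℝ)
    (hq : ∀ l : ℤ, -(m : ℤ) ≤ l → l ≤ (m : ℤ) → 0 ≤ q l)
    (hsum : ∑ l ∈ Finset.Icc (-(m : ℤ)) (m : ℤ), q l = 1)
    (hq1 : 0 < max (q 1) (q (-1)))
    (wf : ℕ → ℝ) (hwf : ∀ i : ℕ, wf i = (n : ℝ) * max (q (i : ℤ)) (q (-(i : ℤ))))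
    (S0 K σ τ h r p : ℝ) (hS0 : 0 < S0) (hK : 0 < K)
    (hp0 : 0 ≤ p) (hp1 : p ≤ 1)
    (ε : ℝ) (hε : 0 < ε) (kbar : ℕ)
    (hkbar : max ((m : ℝ) * (⌈2 * Wseq wf m - 1⌉ : ℤ) - 1)
        ((m : ℝ) * (⌈Wseq wf m * Real.exp 1 - Real.log ε - r * τ +
            Real.log (4 * m * ((m : ℝ) + 1) * K * Gconst wf m)⌉ : ℤ) - 1) ≤ (kbar : ℝ)) :
    Vput n m q p S0 K σ τ h r - VTT n m q p S0 K σ τ h r kbar kbar < ε := by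
  have hq' : ∀ l ∈ Icc (-(m : ℤ)) m, 0 ≤ q l := fun l hl =>
    hq l (mem_Icc.1 hl).1 (mem_Icc.1 hl).2
  have hw : ∀ i ∈ Icc 1 m, 0 ≤ wf i := fun i hi => by
    rw [hwf]
    exact mul_nonneg (Nat.cast_nonneg n)
      ((hq' i (by simp only [mem_Icc] at hi ⊢; omega)).trans (le_max_left _ _))
  have hw1 : 0 < wf 1 := by
    rw [hwf]
    exact mul_pos (by exact_mod_cast hn) (by simpa using hq1)
  have hP : 0 < ∏ i ∈ Icc 1 (m - 1), Mseq wf i ^ 2 := prod_pos fun i hi => by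
    have := one_le_Mseq hw1 hw (Icc_subset_Icc_right (Nat.sub_le m 1) hi)
    positivity
  have hx := le_add_one_div_of_mul_ceil_sub_one_le hm ((le_max_right _ _).trans hkbar)
  calc Vput n m q p S0 K σ τ h r - VTT n m q p S0 K σ τ h r kbar kbar
      ≤ exp (-(r * τ)) * K *
          ∑ s ∈ (paths n m).filter (fun s => ¬staysInBand n kbar kbar s), pathWeight n q s :=
        Vput_sub_VTT_le hq' hp0 hp1 hS0.le hK.le kbar kbar
    _ ≤ exp (-(r * τ)) * K * (2 * exp (-(((kbar : ℝ) + 1) / m)) *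
          exp ((exp 1 - 1) * ∑ i ∈ Icc 1 m, wf i)) := by
        have hsumw : ∑ i ∈ Icc 1 m, wf i = n * ∑ i ∈ Icc 1 m, max (q i) (q (-i)) := by
          simp only [hwf, mul_sum]
        rw [hsumw, two_mul]
        gcongr
        exact sum_filter_not_staysInBand_le_exp hq' hsum kbar kbar
    _ ≤ exp (-(r * τ)) * K * (2 * exp (-(((kbar : ℝ) + 1) / m)) *
          (exp ((exp 1 - 1) * Wseq wf m + 1 / 2) * ∏ i ∈ Icc 1 (m - 1), Mseq wf i ^ 2)) := by
        gcongr
        exact exp_mul_sum_le_mul_prod hm hw1 hw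
    _ < ε := error_bound_lt_of_threshold_le hm hK hε
        (Wseq_pos hw1 hw (mem_Icc.2 ⟨hm, le_rfl⟩)).le hP hx

/-- Theorem (European put, general m): if `k̄ = l̄` satisfies
`k̄ ≥ max{ m⌈2W_m − 1⌉ − 1, m⌈W_m e − ln ε − rτ + ln(4m(m+1)KG)⌉ − 1 }`,
then `V − V^{TT} < ε`. -/
theorem put_truncation_error_general (n m : ℕ) (hn : 1 ≤ n) (hm : 1 ≤ m) (q : ℤ → ℝ)
    (hq : ∀ l : ℤ, -(m : ℤ) ≤ l → l ≤ (m : ℤ) → 0 ≤ q l)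
    (hsum : ∑ l ∈ Finset.Icc (-(m : ℤ)) (m : ℤ), q l = 1)
    (hq1 : 0 < max (q 1) (q (-1)))
    (wf : ℕ → ℝ) (hwf : ∀ i : ℕ, wf i = (n : ℝ) * max (q (i : ℤ)) (q (-(i : ℤ))))
    (S0 K σ τ h r p : ℝ) (hS0 : 0 < S0) (hK : 0 < K) (hh : 0 < h) (hτ : 0 < τ)
    (hp0 : 0 ≤ p) (hp1 : p ≤ 1)
    (ε : ℝ) (hε : 0 < ε) (kbar : ℕ)
    (hkbar : max ((m : ℝ) * (⌈2 * Wseq wf m - 1⌉ : ℤ) - 1)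
        ((m : ℝ) * (⌈Wseq wf m * Real.exp 1 - Real.log ε - r * τ +
            Real.log (4 * m * ((m : ℝ) + 1) * K * Gconst wf m)⌉ : ℤ) - 1) ≤ (kbar : ℝ)) :
    Vput n m q p S0 K σ τ h r - VTT n m q p S0 K σ τ h r kbar kbar < ε :=
  put_truncation_error_general_general n m hn hm q hq hsum hq1 wf hwf S0 K σ τ h r p hS0 hK hp0 hp1
    ε hε kbar hkbar
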